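/- Let n ≥ 1, let u, v : {1,…,n} → ℝ satisfy Assumption 1 with Q = Q(u,v), and let a, c ∈ ℝ^n. Define arc costs ℓ(i,j) = c_i − u_j (a_i − (u_i/u_j) a_j)² / (4 u_i (u_j v_i − u_i v_j)) for 1 ≤ i < j ≤ n and ℓ(i, n+1) = c_i − a_i² / (4 u_i v_i) for 1 ≤ i ≤ n. Then for every nonempty subset S = {t_1 < t_2 < … < t_k} of {1,…,n}, setting t_{k+1} := n+1, one has −(1/4) aᵀ hat(Q_S⁻¹) a + Σ_{i ∈ S} c_i = Σ_{ℓ=1}^{k} ℓ(t_ℓ, t_{ℓ+1}). -/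

import Mathlib

open Matrix BigOperators

/-- The factorizable matrix `Q(u,v)`. -/
noncomputable def facQ (n : ℕ) (u v : Fin n → ℝ) : Matrix (Fin n) (Fin n) ℝ :=
  Matrix.of fun i j => if i ≤ j then u i * v j else u j * v i

/-- Assumption 1. -/
def Assumption1 (n : ℕ) (u v : Fin n → ℝ) : Prop :=
  (∀ i : Fin n, 0 < u i * v i) ∧
    ∀ i j : Fin n, i < j → 0 < u i * v j * (u j * v i - u i * v j)

/-- The principal submatrix of `Q` indexed by `S`. -/
noncomputable def subMat (n : ℕ) (Q : Matrix (Fin n) (Fin n) ℝ) (S : Finset (Fin n)) :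
    Matrix {x : Fin n // x ∈ S} {x : Fin n // x ∈ S} ℝ :=
  Q.submatrix (fun p => (p : Fin n)) (fun p => (p : Fin n))

/-- The `n×n` matrix agreeing with `(Q_S)⁻¹` on `S×S` and `0` elsewhere. -/
noncomputable def hatInv (n : ℕ) (Q : Matrix (Fin n) (Fin n) ℝ) (S : Finset (Fin n)) :
    Matrix (Fin n) (Fin n) ℝ :=
  Matrix.of fun a b =>
    if ha : a ∈ S then
      if hb : b ∈ S then (subMat n Q S)⁻¹ ⟨a, ha⟩ ⟨b, hb⟩ else 0
    else 0

/-- The arc cost `ℓ(i,j) = c_i − u_j (a_i − (u_i/u_j) a_j)² / (4 u_i (u_j v_i − u_i v_j))`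
for `1 ≤ i < j ≤ n`. -/
noncomputable def arcMid (n : ℕ) (u v a c : Fin n → ℝ) (i j : Fin n) : ℝ :=
  c i - u j * (a i - u i / u j * a j) ^ 2 / (4 * (u i * (u j * v i - u i * v j)))

/-- The arc cost `ℓ(i, n+1) = c_i − a_i² / (4 u_i v_i)`. -/
noncomputable def arcEnd (n : ℕ) (u v a c : Fin n → ℝ) (i : Fin n) : ℝ :=
  c i - a i ^ 2 / (4 * (u i * v i))

/-!
Under Assumption 1 the ratios `ρ = v / u` are positive and strictly decreasing, and
`Q(u,v)ᵢⱼ = uᵢ uⱼ ρ_max(i,j)`. Writing `ρ_max(i,j)` as the telescoping sum of the positive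
steps `δₘ = ρₘ - ρₘ₊₁` over `m ≥ max(i,j)` (with `ρₖ = 0`) factors `Q = B diag(δ) Bᵀ`, where
`Bᵢₘ = uᵢ [i ≤ m]` is upper triangular. Hence `aᵀ Q⁻¹ a = ∑ₘ zₘ² / δₘ` with `B z = a`, which
telescopes the same way: `zₘ = aₘ/uₘ - aₘ₊₁/uₘ₊₁`. The term `m` is `4 (cₘ - ℓ(m, m+1))`.
Since `t` is increasing, `Q_S` is again of the form `Q(u ∘ t, v ∘ t)`.
-/

section Congruence
variable {ι K : Type*} [Fintype ι] [DecidableEq ι] [Field K]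

theorem inv_diagonal_of_ne_zero {d : ι → K} (hd : ∀ i, d i ≠ 0) :
    (diagonal d)⁻¹ = diagonal fun i => (d i)⁻¹ :=
  inv_eq_left_inv <| by simp [diagonal_mul_diagonal, inv_mul_cancel₀ (hd _)]

theorem dotProduct_inv_mulVec_of_eq_mul_diagonal_mul_transpose
    (B : Matrix ι ι K) (d z : ι → K) (hB : IsUnit B.det) (hd : ∀ i, d i ≠ 0) :
    (B *ᵥ z) ⬝ᵥ ((B * diagonal d * Bᵀ)⁻¹ *ᵥ (B *ᵥ z)) = ∑ i, z i ^ 2 / d i := by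
  rw [Matrix.mul_inv_rev, Matrix.mul_inv_rev, inv_diagonal_of_ne_zero hd, ← mulVec_mulVec,
    ← mulVec_mulVec, mulVec_mulVec z, nonsing_inv_mul _ hB, one_mulVec, dotProduct_mulVec,
    ← mulVec_transpose, mulVec_mulVec, ← transpose_nonsing_inv, transpose_transpose,
    nonsing_inv_mul _ hB, one_mulVec]
  simp only [dotProduct, mulVec_diagonal]
  exact Finset.sum_congr rfl fun i _ => by ring

theorem dotProduct_inv_submatrix_equiv_mulVec {κ : Type*} [Fintype κ] [DecidableEq κ]
    (M : Matrix κ κ K) (e : ι ≃ κ) (w : κ → K) :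
    (w ∘ e) ⬝ᵥ ((M.submatrix e e)⁻¹ *ᵥ (w ∘ e)) = w ⬝ᵥ (M⁻¹ *ᵥ w) := by
  rw [inv_submatrix_equiv, submatrix_mulVec_equiv, Function.comp_assoc, Equiv.self_comp_symm,
    Function.comp_id, comp_equiv_dotProduct_comp_equiv]

end Congruence

def zeroExtend {M : Type*} [Zero M] {k : ℕ} (f : Fin k → M) (m : ℕ) : M :=
  if h : m < k then f ⟨m, h⟩ else 0

section SuccDiff
variable {M : Type*} [AddCommGroup M] {k : ℕ}

-- The last difference is `f (k - 1) - 0`: it plays the role of the arc into the sink `n + 1`.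
def succDiff (f : Fin k → M) (m : Fin k) : M :=
  zeroExtend f m - zeroExtend f (m + 1)

theorem sum_succDiff_of_le (f : Fin k → M) (i : Fin k) :
    ∑ m : Fin k, (if i ≤ m then succDiff f m else 0) = f i := by
  simp only [Fin.le_def, succDiff]
  rw [Fin.sum_univ_eq_sum_range (fun m => if (i : ℕ) ≤ m then
    zeroExtend f m - zeroExtend f (m + 1) else 0), Finset.sum_ite, Finset.sum_const_zero,
    add_zero]
  have hIco : {m ∈ Finset.range k | (i : ℕ) ≤ m} = Finset.Ico (i : ℕ) k := by
    ext m; simp [and_comm]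
  rw [hIco, ← neg_inj, ← Finset.sum_neg_distrib]
  simp only [neg_sub]
  rw [Finset.sum_Ico_sub _ i.is_lt.le]
  simp [zeroExtend]

theorem succDiff_of_lt {f : Fin k → M} {m : Fin k} (h : (m : ℕ) + 1 < k) :
    succDiff f m = f m - f ⟨m + 1, h⟩ := by
  simp [succDiff, zeroExtend, h]

theorem succDiff_of_not_lt {f : Fin k → M} {m : Fin k} (h : ¬(m : ℕ) + 1 < k) :
    succDiff f m = f m := by
  simp [succDiff, zeroExtend, h]

end SuccDiff

theorem succDiff_pos {k : ℕ} {f : Fin k → ℝ} (hpos : ∀ i, 0 < f i) (hanti : StrictAnti f)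
    (m : Fin k) : 0 < succDiff f m := by
  by_cases h : (m : ℕ) + 1 < k
  · rw [succDiff_of_lt h, sub_pos]
    exact hanti (Fin.mk_lt_mk.2 (Nat.lt_succ_self m))
  · rw [succDiff_of_not_lt h]
    exact hpos m

section Factorization
variable {k : ℕ} (u v : Fin k → ℝ)

noncomputable def upperFactor : Matrix (Fin k) (Fin k) ℝ :=
  Matrix.of fun i m => if i ≤ m then u i else 0

theorem upperFactor_mulVec_succDiff (a : Fin k → ℝ) (hu : ∀ i, u i ≠ 0) :
    upperFactor u *ᵥ succDiff (a / u) = a := by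
  funext i
  calc ∑ m, upperFactor u i m * succDiff (a / u) m
      = u i * ∑ m, (if i ≤ m then succDiff (a / u) m else 0) := by
        simp only [upperFactor, of_apply, ite_mul, zero_mul, Finset.mul_sum, mul_ite, mul_zero]
    _ = a i := by rw [sum_succDiff_of_le, Pi.div_apply, mul_div_cancel₀ _ (hu i)]

theorem sum_upperFactor_mul_upperFactor_of_le (hu : ∀ i, u i ≠ 0) {i j : Fin k}
    (hij : i ≤ j) :
    ∑ m, upperFactor u i m * succDiff (v / u) m * upperFactor u j m = u i * v j := by
  calc ∑ m, upperFactor u i m * succDiff (v / u) m * upperFactor u j m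
      = u i * u j * ∑ m, (if j ≤ m then succDiff (v / u) m else 0) := by
        rw [Finset.mul_sum]
        refine Finset.sum_congr rfl fun m _ => ?_
        simp only [upperFactor, of_apply]
        split_ifs with him hjm hjm
        · ring
        · ring
        · exact absurd (hij.trans hjm) him
        · ring
    _ = u i * v j := by rw [sum_succDiff_of_le, Pi.div_apply]; field_simp [hu j]

theorem facQ_eq_upperFactor_mul_diagonal_mul_transpose (hu : ∀ i, u i ≠ 0) :
    facQ k u v = upperFactor u * diagonal (succDiff (v / u)) * (upperFactor u)ᵀ := by
  ext i j
  rw [mul_apply]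
  simp only [facQ, of_apply, mul_diagonal, transpose_apply]
  split_ifs with hij
  · exact (sum_upperFactor_mul_upperFactor_of_le u v hu hij).symm
  · rw [← sum_upperFactor_mul_upperFactor_of_le u v hu (le_of_not_ge hij)]
    exact Finset.sum_congr rfl fun m _ => by ring

theorem det_upperFactor : (upperFactor u).det = ∏ i, u i := by
  rw [det_of_isUpperTriangular (M := upperFactor u) fun _ _ hji => if_neg (not_le.2 hji)]
  simp [upperFactor]

theorem dotProduct_facQ_inv_mulVec (a : Fin k → ℝ) (hu : ∀ i, u i ≠ 0)
    (hpos : ∀ i, 0 < v i / u i) (hanti : StrictAnti (v / u)) :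
    a ⬝ᵥ ((facQ k u v)⁻¹ *ᵥ a) = ∑ m, succDiff (a / u) m ^ 2 / succDiff (v / u) m := by
  have hB : IsUnit (upperFactor u).det := by
    rw [det_upperFactor, isUnit_iff_ne_zero, Finset.prod_ne_zero_iff]
    exact fun i _ => hu i
  conv_lhs => rw [← upperFactor_mulVec_succDiff u a hu]
  rw [facQ_eq_upperFactor_mul_diagonal_mul_transpose u v hu,
    dotProduct_inv_mulVec_of_eq_mul_diagonal_mul_transpose _ _ _ hB
      fun m => (succDiff_pos (f := v / u) hpos hanti m).ne']

end Factorization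

theorem dotProduct_hatInv_mulVec (n : ℕ) (Q : Matrix (Fin n) (Fin n) ℝ) (S : Finset (Fin n))
    (a : Fin n → ℝ) :
    a ⬝ᵥ (hatInv n Q S *ᵥ a) =
      (fun x : S => a x) ⬝ᵥ ((subMat n Q S)⁻¹ *ᵥ fun x : S => a x) := by
  have hsum : ∀ f : Fin n → ℝ, (∀ p ∉ S, f p = 0) → ∑ p, f p = ∑ x : S, f x := fun f hf => by
    rw [← Finset.sum_subset S.subset_univ fun p _ hp => hf p hp, Finset.sum_coe_sort]
  simp only [dotProduct, mulVec]
  rw [hsum _ fun p hp => by simp [hatInv, hp]]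
  refine Fintype.sum_congr _ _ fun x => ?_
  rw [hsum _ fun q hq => by simp [hatInv, hq]]
  simp [hatInv]

theorem dotProduct_hatInv_image_mulVec {n k : ℕ} (Q : Matrix (Fin n) (Fin n) ℝ)
    {t : Fin k → Fin n} (ht : Function.Injective t) (a : Fin n → ℝ) :
    a ⬝ᵥ (hatInv n Q (Finset.univ.image t) *ᵥ a) =
      (a ∘ t) ⬝ᵥ ((Q.submatrix t t)⁻¹ *ᵥ (a ∘ t)) := by
  let e : Fin k ≃ Finset.univ.image t := Equiv.ofBijective
    (fun i => ⟨t i, Finset.mem_image_of_mem t (Finset.mem_univ i)⟩)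
    ⟨fun i j hij => ht (congrArg Subtype.val hij), fun ⟨x, hx⟩ => by
      obtain ⟨i, -, rfl⟩ := Finset.mem_image.1 hx
      exact ⟨i, rfl⟩⟩
  exact (dotProduct_hatInv_mulVec n Q _ a).trans
    (dotProduct_inv_submatrix_equiv_mulVec (subMat n Q _) e _).symm

theorem facQ_submatrix {n k : ℕ} (u v : Fin n → ℝ) {t : Fin k → Fin n} (ht : StrictMono t) :
    (facQ n u v).submatrix t t = facQ k (u ∘ t) (v ∘ t) := by
  ext i j
  simp [facQ, ht.le_iff_le]

namespace Assumption1
variable {n : ℕ} {u v : Fin n → ℝ}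

theorem comp (h : Assumption1 n u v) {k : ℕ} {t : Fin k → Fin n} (ht : StrictMono t) :
    Assumption1 k (u ∘ t) (v ∘ t) :=
  ⟨fun i => h.1 (t i), fun _ _ hij => h.2 _ _ (ht hij)⟩

theorem ne_zero (h : Assumption1 n u v) (i : Fin n) : u i ≠ 0 :=
  left_ne_zero_of_mul (h.1 i).ne'

theorem div_pos (h : Assumption1 n u v) (i : Fin n) : 0 < v i / u i := by
  have hu := h.ne_zero i
  rw [show v i / u i = u i * v i / u i ^ 2 by field_simp]
  exact _root_.div_pos (h.1 i) (by positivity)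

theorem strictAnti (h : Assumption1 n u v) : StrictAnti (v / u) := fun i j hij => by
  have hi := h.ne_zero i
  have hj := h.ne_zero j
  have key : u i * v j * (u j * v i - u i * v j)
      = (u i * u j) ^ 2 * (v j / u j) * (v i / u i - v j / u j) := by
    field_simp
  have hpos := h.2 i j hij
  rw [key] at hpos
  exact sub_pos.1 ((mul_pos_iff_of_pos_left (mul_pos (by positivity) (h.div_pos j))).1 hpos)

theorem arcMid_eq (h : Assumption1 n u v) (a c : Fin n → ℝ) {i j : Fin n} (hij : i < j) :
    arcMid n u v a c i j = c i - (a i / u i - a j / u j) ^ 2 / (v i / u i - v j / u j) / 4 := by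
  have hi := h.ne_zero i
  have hj := h.ne_zero j
  have hD := right_ne_zero_of_mul (h.2 i j hij).ne'
  rw [arcMid]
  field_simp

theorem arcEnd_eq (h : Assumption1 n u v) (a c : Fin n → ℝ) (i : Fin n) :
    arcEnd n u v a c i = c i - (a i / u i) ^ 2 / (v i / u i) / 4 := by
  have hu := h.ne_zero i
  have hv := right_ne_zero_of_mul (h.1 i).ne'
  rw [arcEnd]
  field_simp

end Assumption1

theorem stmt_14_general (n : ℕ) (u v : Fin n → ℝ) (hA : Assumption1 n u v)
    (a c : Fin n → ℝ)
    (S : Finset (Fin n)) (k : ℕ) (t : Fin k → Fin n)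
    (hmono : StrictMono t) (hrange : S = Finset.image t Finset.univ) :
    -(1 / 4) * (a ⬝ᵥ (hatInv n (facQ n u v) S *ᵥ a)) + ∑ i ∈ S, c i =
      ∑ ℓ : Fin k,
        if h : (ℓ : ℕ) + 1 < k then arcMid n u v a c (t ℓ) (t ⟨(ℓ : ℕ) + 1, h⟩)
        else arcEnd n u v a c (t ℓ) := by
  subst hrange
  have hAt := hA.comp hmono
  rw [dotProduct_hatInv_image_mulVec _ hmono.injective, facQ_submatrix u v hmono,
    dotProduct_facQ_inv_mulVec _ _ _ hAt.ne_zero hAt.div_pos hAt.strictAnti,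
    Finset.sum_image fun _ _ _ _ hij => hmono.injective hij, Finset.mul_sum,
    ← Finset.sum_add_distrib]
  refine Finset.sum_congr rfl fun ℓ _ => ?_
  split_ifs with h
  · rw [hA.arcMid_eq a c (hmono (Fin.mk_lt_mk.2 (Nat.lt_succ_self ℓ))), succDiff_of_lt h,
      succDiff_of_lt h]
    simp only [Pi.div_apply, Function.comp_apply]
    ring
  · rw [hA.arcEnd_eq, succDiff_of_not_lt h, succDiff_of_not_lt h]
    simp only [Pi.div_apply, Function.comp_apply]
    ring

theorem stmt_14 (n : ℕ) (hn : 1 ≤ n) (u v : Fin n → ℝ) (hA : Assumption1 n u v)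
    (a c : Fin n → ℝ)
    (S : Finset (Fin n)) (k : ℕ) (hk : 0 < k) (t : Fin k → Fin n)
    (hmono : StrictMono t) (hrange : S = Finset.image t Finset.univ) :
    -(1 / 4) * (a ⬝ᵥ (hatInv n (facQ n u v) S *ᵥ a)) + ∑ i ∈ S, c i =
      ∑ ℓ : Fin k,
        if h : (ℓ : ℕ) + 1 < k then arcMid n u v a c (t ℓ) (t ⟨(ℓ : ℕ) + 1, h⟩)
        else arcEnd n u v a c (t ℓ) :=
  stmt_14_general n u v hA a c S k t hmono hrange
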